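/- arXiv:1610.04654 — 6 statements merged into one kernel-verified Lean document; each statement's English description precedes it below -/
import Mathlib

section
/- For every n ≥ 1 and complex parameters q, η with η ≠ 0, there exists a constant C (depending only on n, q, η) such that for all points u_0, …, u_n (pairwise distinct modulo the poles of coth), the sum over k = 0, …, n of ∏_{i ≠ k} (q + η·coth(η(u_k - u_i))) equals C. -/
/-!
With `x k = exp (2 η u k)`, each factor is the Möbius expression
`q + η coth (η (u k - u i)) = ((q + η) x k - (q - η) x i) / (x k - x i)`.
For pairwise distinct nonzero `x` and `P = ∏ i, ((q + η) X - (q - η) x i)`, Lagrange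
interpolation of `P` at the nodes `0, x 0, …, x n` computes its leading coefficient
`(q + η) ^ (n + 1)` as a sum over the nodes: the node `0` contributes `(q - η) ^ (n + 1)` and
the node `x k` contributes `2 η` times the `k`-th summand. Hence the sum is
`((q + η) ^ (n + 1) - (q - η) ^ (n + 1)) / (2 η)`.
-/

open Complex Finset

noncomputable def coth (t : ℂ) : ℂ := Complex.cosh t / Complex.sinh t

section

open Polynomial

lemma Finset.insertNone_erase_none {α : Type*} [DecidableEq α] (s : Finset α) :
    (insertNone s).erase none = s.map .some := by
  ext (_ | a) <;> simp

lemma Finset.insertNone_erase_some {α : Type*} [DecidableEq α] (s : Finset α) (a : α) :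
    (insertNone s).erase (some a) = insertNone (s.erase a) := by
  ext (_ | b) <;> simp

lemma Polynomial.natDegree_C_mul_X_sub_C_le {R : Type*} [CommRing R] (a c : R) :
    (C a * X - C c).natDegree ≤ 1 := by
  compute_degree

lemma Polynomial.coeff_prod_C_mul_X_sub_C {R ι : Type*} [CommRing R] (s : Finset ι) (a : R)
    (c : ι → R) :
    (∏ i ∈ s, (C a * X - C (c i))).coeff #s = a ^ #s := by
  simpa [coeff_C, coeff_X] using
    coeff_prod_of_natDegree_le (s := s) (fun i => C a * X - C (c i)) 1
      fun i _ => natDegree_C_mul_X_sub_C_le a (c i)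

lemma Polynomial.natDegree_prod_C_mul_X_sub_C_le {R ι : Type*} [CommRing R] (s : Finset ι) (a : R)
    (c : ι → R) :
    (∏ i ∈ s, (C a * X - C (c i))).natDegree ≤ #s :=
  (natDegree_prod_le _ _).trans <| by
    simpa using sum_le_sum fun i (_ : i ∈ s) => natDegree_C_mul_X_sub_C_le a (c i)

theorem sub_mul_sum_prod_mul_sub_mul_div_sub {F ι : Type*} [Field F] [DecidableEq ι]
    {s : Finset ι} {x : ι → F} (hx : Set.InjOn x s) (hx0 : ∀ i ∈ s, x i ≠ 0) (a b : F) :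
    (a - b) * ∑ k ∈ s, ∏ i ∈ s.erase k, (a * x k - b * x i) / (x k - x i) = a ^ #s - b ^ #s := by
  set P := ∏ i ∈ s, (C a * X - C (b * x i)) with hP
  set v : Option ι → F := fun o => o.elim 0 x
  have hv : Set.InjOn v (insertNone s) := by
    rintro (_ | i) hi (_ | j) hj h
    · rfl
    · exact absurd h.symm (hx0 j (by simpa using hj))
    · exact absurd h (hx0 i (by simpa using hi))
    · exact congrArg some (hx (by simpa using hi) (by simpa using hj) h)
  have hdeg : P.degree < #(insertNone s) := by
    rw [card_insertNone]
    exact degree_le_natDegree.trans_lt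
      (by exact_mod_cast Nat.lt_succ_of_le (natDegree_prod_C_mul_X_sub_C_le s a _))
  have hnone : P.eval (v none) / ∏ j ∈ s.map .some, (v none - v j) = b ^ #s := by
    rw [prod_map, hP, eval_prod, ← prod_div_distrib, ← prod_const]
    refine prod_congr rfl fun i hi => ?_
    simp [v, mul_div_cancel_right₀ _ (hx0 i hi)]
  have hsome : ∀ k ∈ s,
      P.eval (v (some k)) / ∏ j ∈ (insertNone s).erase (some k), (v (some k) - v j)
        = (a - b) * ∏ i ∈ s.erase k, (a * x k - b * x i) / (x k - x i) := by
    intro k hk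
    rw [insertNone_erase_some, prod_insertNone, hP, eval_prod, ← mul_prod_erase s _ hk,
      prod_div_distrib]
    simp only [v, Option.elim, sub_zero, eval_sub, eval_mul, eval_C, eval_X]
    rw [mul_div_mul_comm, ← sub_mul, mul_div_cancel_right₀ _ (hx0 k hk)]
  have hsum := Lagrange.coeff_eq_sum hv hdeg
  rw [card_insertNone, Nat.add_sub_cancel, coeff_prod_C_mul_X_sub_C, sum_insertNone,
    insertNone_erase_none, hnone, sum_congr rfl hsome, ← mul_sum] at hsum
  linear_combination -hsum

end

namespace Complex

lemma exp_two_mul_eq_exp_sub_mul_exp_add (w z : ℂ) :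
    exp (2 * w) = exp (w - z) * exp (w + z) := by
  rw [← exp_add]; ring_nf

lemma sinh_sub_eq_div (w z : ℂ) :
    sinh (w - z) = (exp (2 * w) - exp (2 * z)) / (2 * exp (w + z)) := by
  rw [exp_two_mul_eq_exp_sub_mul_exp_add w z, add_comm w z, exp_two_mul_eq_exp_sub_mul_exp_add z w,
    ← sub_mul, ← neg_sub w z, ← two_sinh, mul_div_mul_right _ _ (exp_ne_zero _),
    mul_div_cancel_left₀ _ two_ne_zero]

lemma cosh_sub_eq_div (w z : ℂ) :
    cosh (w - z) = (exp (2 * w) + exp (2 * z)) / (2 * exp (w + z)) := by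
  rw [exp_two_mul_eq_exp_sub_mul_exp_add w z, add_comm w z, exp_two_mul_eq_exp_sub_mul_exp_add z w,
    ← add_mul, ← neg_sub w z, ← two_cosh, mul_div_mul_right _ _ (exp_ne_zero _),
    mul_div_cancel_left₀ _ two_ne_zero]

end Complex

lemma coth_sub_eq_div (w z : ℂ) :
    coth (w - z) = (exp (2 * w) + exp (2 * z)) / (exp (2 * w) - exp (2 * z)) := by
  rw [coth, sinh_sub_eq_div, cosh_sub_eq_div, div_div_div_cancel_right₀ (by simp)]

lemma add_mul_coth_sub {w z : ℂ} (h : exp (2 * w) ≠ exp (2 * z)) (q η : ℂ) :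
    q + η * coth (w - z) =
      ((q + η) * exp (2 * w) - (q - η) * exp (2 * z)) / (exp (2 * w) - exp (2 * z)) := by
  rw [coth_sub_eq_div, mul_div_assoc', add_div' _ _ _ (sub_ne_zero.2 h)]
  ring

lemma exp_two_mul_ne_of_sinh_sub_ne_zero {w z : ℂ} (h : sinh (w - z) ≠ 0) :
    exp (2 * w) ≠ exp (2 * z) := by
  intro he
  rw [sinh_sub_eq_div, he, sub_self, zero_div] at h
  exact h rfl

theorem coth_hirzebruch_sum_constant_general (n : ℕ) (q η : ℂ) (hη : η ≠ 0) :
    ∃ C : ℂ, ∀ u : Fin (n + 1) → ℂ,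
      (∀ i k : Fin (n + 1), i ≠ k → Complex.sinh (η * (u k - u i)) ≠ 0) →
      ∑ k : Fin (n + 1), ∏ i ∈ Finset.univ.erase k,
        (q + η * coth (η * (u k - u i))) = C := by
  refine ⟨((q + η) ^ (n + 1) - (q - η) ^ (n + 1)) / (2 * η), fun u hu => ?_⟩
  set x : Fin (n + 1) → ℂ := fun k => exp (2 * (η * u k))
  have hx : ∀ i k, i ≠ k → x k ≠ x i := fun i k hik =>
    exp_two_mul_ne_of_sinh_sub_ne_zero (by rw [← mul_sub]; exact hu i k hik)
  have hfactor : ∀ k, ∀ i ∈ univ.erase k,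
      q + η * coth (η * (u k - u i)) = ((q + η) * x k - (q - η) * x i) / (x k - x i) :=
    fun k i hi => by rw [mul_sub]; exact add_mul_coth_sub (hx i k (ne_of_mem_erase hi)) q η
  have hsum := sub_mul_sum_prod_mul_sub_mul_div_sub (s := univ)
    (fun i _ k _ h => by_contra fun hik => hx i k hik h.symm) (fun i _ => exp_ne_zero _)
    (q + η) (q - η)
  rw [card_univ, Fintype.card_fin, add_sub_sub_cancel, ← two_mul] at hsum
  rw [sum_congr rfl fun k _ => prod_congr rfl (hfactor k), eq_div_iff (mul_ne_zero two_ne_zero hη)]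
  linear_combination hsum

theorem coth_hirzebruch_sum_constant (n : ℕ) (hn : 1 ≤ n) (q η : ℂ) (hη : η ≠ 0) :
    ∃ C : ℂ, ∀ u : Fin (n + 1) → ℂ,
      (∀ i k : Fin (n + 1), i ≠ k → Complex.sinh (η * (u k - u i)) ≠ 0) →
      ∑ k : Fin (n + 1), ∏ i ∈ Finset.univ.erase k,
        (q + η * coth (η * (u k - u i))) = C :=
  coth_hirzebruch_sum_constant_general n q η hη
end

section
/- Let f(t) = (e^{αt} − e^{βt})/(α e^{βt} − β e^{αt}) for complex α ≠ β. Then for every n ≥ 1 there exists a constant C such that for all u_0, …, u_n with pairwise distinct values making all f(u_i − u_k) defined and nonzero, ∑_{k=0}^n ∏_{i ≠ k} 1/f(u_i − u_k) = C. -/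
/-!
Put `x_j = exp ((α - β) u_j)`. Multiplying numerator and denominator of `f (u_i - u_k)` by
`exp (α u_k - β u_i)` turns `1 / f (u_i - u_k)` into
`(α x_k - β x_i) / (x_i - x_k)`, so up to the sign `(-1)^n` the left-hand side is
`∑_k ∏_{i ≠ k} (α x_k - β x_i) / (x_k - x_i)`. This is the top-coefficient Lagrange formula for
`P(z) = ∏_i (α z - β x_i)` at the nodes `0, x_0, …, x_n`: the node `0` contributes `β^(n+1)`,
the node `x_k` contributes `(α - β)` times the `k`-th summand, and the top coefficient is `α^(n+1)`.
Hence the sum is `(-1)^n (α^(n+1) - β^(n+1)) / (α - β)`, independent of `u`.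
-/

open Complex Finset

noncomputable def toddFun (α β t : ℂ) : ℂ :=
  (Complex.exp (α * t) - Complex.exp (β * t)) /
    (α * Complex.exp (β * t) - β * Complex.exp (α * t))

theorem Fintype.prod_erase_none {ι M : Type*} [Fintype ι] [DecidableEq ι] [CommMonoid M]
    (f : Option ι → M) : ∏ j ∈ univ.erase none, f j = ∏ i, f (some i) := by
  rw [show univ.erase none = univ.map .some by ext (_ | _) <;> simp, prod_map]
  rfl

theorem Fintype.prod_erase_some {ι M : Type*} [Fintype ι] [DecidableEq ι] [CommMonoid M]
    (f : Option ι → M) (k : ι) :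
    ∏ j ∈ univ.erase (some k), f j = f none * ∏ i ∈ univ.erase k, f (some i) := by
  rw [show univ.erase (some k) = insert none ((univ.erase k).map .some) by
      ext (_ | _) <;> simp, prod_insert (by simp), prod_map]
  rfl

namespace Polynomial

variable {R ι : Type*} [CommRing R] (a : R) (b : ι → R) (s : Finset ι)

theorem natDegree_C_mul_X_sub_C_le_s4 (c : R) : (C a * X - C c).natDegree ≤ 1 :=
  natDegree_sub_C.trans_le <| (natDegree_C_mul_le a X).trans natDegree_X_le

theorem natDegree_prod_C_mul_X_sub_C_le_s4 : (∏ i ∈ s, (C a * X - C (b i))).natDegree ≤ #s := by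
  rw [card_eq_sum_ones]
  exact (natDegree_prod_le _ _).trans (sum_le_sum fun i _ => natDegree_C_mul_X_sub_C_le_s4 a (b i))

theorem coeff_prod_C_mul_X_sub_C_card : (∏ i ∈ s, (C a * X - C (b i))).coeff #s = a ^ #s := by
  have := coeff_prod_of_natDegree_le s _ 1 fun i _ => natDegree_C_mul_X_sub_C_le_s4 a (b i)
  rw [mul_one] at this
  simp [this]

end Polynomial

open Polynomial in
theorem sub_mul_sum_prod_div_eq_pow_sub_pow {F ι : Type*} [Field F] [Fintype ι] [DecidableEq ι]
    (a b : F) {x : ι → F} (hx : Function.Injective x) (hx0 : ∀ i, x i ≠ 0) :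
    (a - b) * ∑ k, ∏ i ∈ univ.erase k, (a * x k - b * x i) / (x k - x i) =
      a ^ Fintype.card ι - b ^ Fintype.card ι := by
  let v : Option ι → F := fun o => o.elim 0 x
  have hv : Function.Injective v := by
    rintro (_ | i) (_ | j) h
    · rfl
    · exact absurd h.symm (hx0 j)
    · exact absurd h (hx0 i)
    · exact congrArg some (hx h)
  let P : F[X] := ∏ i, (C a * X - C (b * x i))
  have hP_eval (z : F) : P.eval z = ∏ i, (a * z - b * x i) := by simp [P, eval_prod]
  have hP_deg : P.degree < #(univ : Finset (Option ι)) := by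
    have := natDegree_prod_C_mul_X_sub_C_le_s4 a (fun i => b * x i) univ
    rw [card_univ] at this ⊢
    rw [Fintype.card_option]
    exact degree_le_natDegree.trans_lt (by exact_mod_cast Nat.lt_succ_of_le this)
  have hP_coeff : P.coeff (Fintype.card ι) = a ^ Fintype.card ι := by
    simpa only [card_univ] using coeff_prod_C_mul_X_sub_C_card a (fun i => b * x i) univ
  have hnone : P.eval (v none) / ∏ j ∈ univ.erase none, (v none - v j) = b ^ Fintype.card ι := by
    rw [hP_eval, Fintype.prod_erase_none, ← prod_div_distrib]
    simp [v, hx0]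
  have hsome (k : ι) : P.eval (v (some k)) / ∏ j ∈ univ.erase (some k), (v (some k) - v j) =
      (a - b) * ∏ i ∈ univ.erase k, (a * x k - b * x i) / (x k - x i) := by
    rw [hP_eval, Fintype.prod_erase_some, ← mul_prod_erase univ _ (mem_univ k), prod_div_distrib]
    simp only [v, Option.elim, sub_zero]
    rw [mul_div_mul_comm, ← sub_mul, mul_div_cancel_right₀ _ (hx0 k)]
  have h := Lagrange.coeff_eq_sum hv.injOn hP_deg
  rw [card_univ, Fintype.card_option, add_tsub_cancel_right, hP_coeff, Fintype.sum_option, hnone]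
    at h
  simp only [hsome, ← mul_sum] at h
  rw [h]; ring

theorem toddFun_sub (α β a b : ℂ) :
    toddFun α β (a - b) =
      (exp ((α - β) * a) - exp ((α - β) * b)) /
        (α * exp ((α - β) * b) - β * exp ((α - β) * a)) := by
  rw [toddFun, ← mul_div_mul_left _ _ (exp_ne_zero (α * b - β * a))]
  congr 1 <;> simp only [mul_sub, mul_left_comm _ α, mul_left_comm _ β, ← exp_add] <;> ring_nf

theorem todd_hirzebruch_equation_general (n : ℕ) (α β : ℂ) (hαβ : α ≠ β) :
    ∃ C : ℂ, ∀ u : Fin (n + 1) → ℂ,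
      (∀ i k : Fin (n + 1), i ≠ k →
        α * Complex.exp (β * (u i - u k)) - β * Complex.exp (α * (u i - u k)) ≠ 0 ∧
        toddFun α β (u i - u k) ≠ 0) →
      ∑ k : Fin (n + 1), ∏ i ∈ Finset.univ.erase k, (toddFun α β (u i - u k))⁻¹ = C := by
  refine ⟨(-1) ^ n * ((α ^ (n + 1) - β ^ (n + 1)) / (α - β)), fun u hu => ?_⟩
  set x : Fin (n + 1) → ℂ := fun j => exp ((α - β) * u j)
  have hx : Function.Injective x := fun i k h => by
    by_contra hik
    exact (hu i k hik).2 (by rw [toddFun_sub]; simp only [x] at h; rw [h, sub_self, zero_div])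
  have hterm (k : Fin (n + 1)) : ∏ i ∈ univ.erase k, (toddFun α β (u i - u k))⁻¹ =
      (-1) ^ n * ∏ i ∈ univ.erase k, (α * x k - β * x i) / (x k - x i) := by
    have hneg := prod_neg (s := univ.erase k) fun i => (α * x k - β * x i) / (x k - x i)
    rw [card_erase_of_mem (mem_univ k), card_fin, add_tsub_cancel_right] at hneg
    rw [← hneg]
    refine prod_congr rfl fun i _ => ?_
    rw [toddFun_sub, inv_div, ← div_neg, neg_sub]
  have hsum := sub_mul_sum_prod_div_eq_pow_sub_pow α β hx fun j => exp_ne_zero _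
  rw [Fintype.card_fin] at hsum
  rw [sum_congr rfl fun k _ => hterm k, ← mul_sum]
  exact congrArg _ (eq_div_of_mul_eq (sub_ne_zero.2 hαβ) (by rw [mul_comm, hsum]))

theorem todd_hirzebruch_equation (n : ℕ) (hn : 1 ≤ n) (α β : ℂ) (hαβ : α ≠ β) :
    ∃ C : ℂ, ∀ u : Fin (n + 1) → ℂ,
      (∀ i k : Fin (n + 1), i ≠ k →
        α * Complex.exp (β * (u i - u k)) - β * Complex.exp (α * (u i - u k)) ≠ 0 ∧
        toddFun α β (u i - u k) ≠ 0) →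
      ∑ k : Fin (n + 1), ∏ i ∈ Finset.univ.erase k, (toddFun α β (u i - u k))⁻¹ = C :=
  todd_hirzebruch_equation_general n α β hαβ
end

section
/- For n ≥ 1 and a nonzero complex number λ, the function (u_0, …, u_n) ↦ ∑_{k=0}^n ∏_{i ≠ k} e^{λ(u_i − u_k)}·(q + u_k − u_i) is not constant on any nonempty open set (for any fixed q ∈ ℂ). Equivalently, the function f(t) = t·e^{λt}/(1 + q t) with λ ≠ 0 does not satisfy the Hirzebruch functional equation ∑_{k=0}^n ∏_{i≠k} 1/f(u_i − u_k) = C. -/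
/-!
Fix a point `c ∈ U` and vary only the coordinate `u j = t`. The resulting function of `t` is
entire and constant near `c j`, hence constant on all of `ℂ`. Along the ray
`t = c j - s / λ`, `s → +∞`, every factor of the `j`-th summand is `eˢ` times a nonconstant
affine function of `s`, so that summand blows up; every other summand has exactly one factor
involving `t`, namely `e⁻ˢ` times an affine function of `s`, so it tends to `0`. This
contradicts constancy as soon as there are at least two coordinates.
-/

open Complex Finset Filter Topology Function

theorem Filter.Tendsto.finset_prod_atTop {ι α R : Type*} [CommSemiring R] [PartialOrder R]
    [IsOrderedRing R] {l : Filter α} {s : Finset ι} (hs : s.Nonempty) {f : ι → α → R}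
    (hf : ∀ i ∈ s, Tendsto (f i) l atTop) : Tendsto (fun x => ∏ i ∈ s, f i x) l atTop := by
  induction hs using Finset.Nonempty.cons_induction with
  | singleton i => simpa using hf i (mem_singleton_self i)
  | cons i s hi hs ih =>
    simp only [prod_cons]
    exact (hf i (mem_cons_self i s)).atTop_mul_atTop₀
      (ih fun k hk => hf k (mem_cons_of_mem hk))

lemma tendsto_exp_sub_mul_linear (a α β : ℂ) :
    Tendsto (fun s : ℝ => exp (a - s) * (α + β * s)) atTop (𝓝 0) := by
  have h₀ := Real.tendsto_exp_neg_atTop_nhds_zero.ofReal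
  have h₁ := (Real.tendsto_pow_mul_exp_neg_atTop_nhds_zero 1).ofReal
  have := ((h₀.const_mul α).add (h₁.const_mul β)).const_mul (exp a)
  simp only [ofReal_exp, ofReal_neg, ofReal_mul, ofReal_zero, pow_one, mul_zero, add_zero] at this
  refine this.congr fun s => ?_
  rw [sub_eq_add_neg, Complex.exp_add]
  ring

lemma tendsto_norm_exp_add_mul_linear (a α : ℂ) {β : ℂ} (hβ : β ≠ 0) :
    Tendsto (fun s : ℝ => ‖exp (a + s) * (α + β * s)‖) atTop atTop := by
  have hlin : Tendsto (fun s : ℝ => ‖α + β * s‖) atTop atTop := by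
    have := (Polynomial.C β * Polynomial.X + Polynomial.C α).tendsto_norm_atTop
      (by rw [Polynomial.degree_linear hβ]; exact zero_lt_one)
      (z := fun s : ℝ => (s : ℂ)) (by simpa using tendsto_abs_atTop_atTop)
    simpa [add_comm] using this
  have := (Real.tendsto_exp_atTop.atTop_mul_atTop₀ hlin).const_mul_atTop (Real.exp_pos a.re)
  refine this.congr fun s => ?_
  rw [norm_mul, Complex.norm_exp, add_re, ofReal_re, Real.exp_add]
  ring

section Hirzebruch

variable {ι : Type*} [Fintype ι] [DecidableEq ι]

noncomputable def hirzebruchTerm (lam q : ℂ) (u : ι → ℂ) (k : ι) : ℂ :=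
  ∏ i ∈ univ.erase k, exp (lam * (u i - u k)) * (q + u k - u i)

noncomputable def hirzebruchSum (lam q : ℂ) (u : ι → ℂ) : ℂ :=
  ∑ k, hirzebruchTerm lam q u k

variable {lam : ℂ} (q : ℂ)

lemma hirzebruchSum_update_eq_of_forall_mem {U : Set (ι → ℂ)} (hU : IsOpen U) {c : ι → ℂ}
    (hc : c ∈ U) {C : ℂ} (hC : ∀ u ∈ U, hirzebruchSum lam q u = C) (j : ι) (t : ℂ) :
    hirzebruchSum lam q (update c j t) = C := by
  have hupdate : Differentiable ℂ (update c j) := fun t =>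
    (hasFDerivAt_update c t).differentiableAt
  have hdiff : Differentiable ℂ fun t => hirzebruchSum lam q (update c j t) := by
    unfold hirzebruchSum hirzebruchTerm
    fun_prop
  have hlocal : (fun t => hirzebruchSum lam q (update c j t)) =ᶠ[𝓝 (c j)] fun _ => C := by
    have hcont : ContinuousAt (update c j) (c j) := hupdate.continuous.continuousAt
    rw [ContinuousAt, update_eq_self] at hcont
    filter_upwards [hcont (hU.mem_nhds hc)] with t ht using hC _ ht
  have hanalytic : AnalyticOnNhd ℂ (fun t => hirzebruchSum lam q (update c j t)) Set.univ :=
    fun z _ => hdiff.analyticAt z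
  exact congrFun (hanalytic.eq_of_eventuallyEq analyticOnNhd_const hlocal) t

variable (c : ι → ℂ) (j : ι)

lemma tendsto_norm_hirzebruchTerm_update_self [Nontrivial ι] (hlam : lam ≠ 0) :
    Tendsto (fun s : ℝ => ‖hirzebruchTerm lam q (update c j (c j - lam⁻¹ * s)) j‖)
      atTop atTop := by
  simp only [hirzebruchTerm, norm_prod]
  refine Tendsto.finset_prod_atTop univ_nontrivial.erase_nonempty fun i hi => ?_
  refine (tendsto_norm_exp_add_mul_linear (lam * (c i - c j)) (q + c j - c i)
    (neg_ne_zero.2 (inv_ne_zero hlam))).congr fun s => ?_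
  rw [update_self, update_of_ne (ne_of_mem_erase hi)]
  congr 3
  · linear_combination -mul_inv_cancel_left₀ hlam (s : ℂ)
  · ring

lemma tendsto_hirzebruchTerm_update_of_ne (hlam : lam ≠ 0) {k : ι} (hk : k ≠ j) :
    Tendsto (fun s : ℝ => hirzebruchTerm lam q (update c j (c j - lam⁻¹ * s)) k)
      atTop (𝓝 0) := by
  have hj : j ∈ univ.erase k := mem_erase.2 ⟨hk.symm, mem_univ j⟩
  have := (tendsto_exp_sub_mul_linear (lam * (c j - c k)) (q + c k - c j) lam⁻¹).mul_const
    (∏ i ∈ (univ.erase k).erase j, exp (lam * (c i - c k)) * (q + c k - c i))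
  rw [zero_mul] at this
  refine this.congr fun s => ?_
  rw [hirzebruchTerm, ← mul_prod_erase _ _ hj, update_self, update_of_ne hk]
  congr 1
  · congr 2
    · linear_combination mul_inv_cancel_left₀ hlam (s : ℂ)
    · ring
  · refine prod_congr rfl fun i hi => ?_
    rw [update_of_ne (ne_of_mem_erase hi)]

lemma not_forall_hirzebruchSum_update_eq [Nontrivial ι] (hlam : lam ≠ 0) (C : ℂ) :
    ¬ ∀ t, hirzebruchSum lam q (update c j t) = C := by
  intro hC
  have hrest : Tendsto (fun s : ℝ => ∑ k ∈ univ.erase j,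
      hirzebruchTerm lam q (update c j (c j - lam⁻¹ * s)) k) atTop (𝓝 0) := by
    simpa only [sum_const_zero] using tendsto_finsetSum (univ.erase j) fun k hk =>
      tendsto_hirzebruchTerm_update_of_ne q c j hlam (ne_of_mem_erase hk)
  have hself : Tendsto (fun s : ℝ => hirzebruchTerm lam q (update c j (c j - lam⁻¹ * s)) j)
      atTop (𝓝 C) := by
    have := hrest.const_sub C
    rw [sub_zero] at this
    refine this.congr fun s => ?_
    rw [← hC (c j - lam⁻¹ * s), hirzebruchSum, ← add_sum_erase _ _ (mem_univ j),
      add_sub_cancel_right]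
  exact not_tendsto_nhds_of_tendsto_atTop
    (tendsto_norm_hirzebruchTerm_update_self q c j hlam) _ hself.norm

end Hirzebruch

theorem exp_poly_sum_not_locally_constant (n : ℕ) (hn : 1 ≤ n) (lam q : ℂ) (hlam : lam ≠ 0)
    (U : Set (Fin (n + 1) → ℂ)) (hU : IsOpen U) (hUne : U.Nonempty) :
    ¬ ∃ C : ℂ, ∀ u ∈ U,
      ∑ k : Fin (n + 1), ∏ i ∈ Finset.univ.erase k,
        Complex.exp (lam * (u i - u k)) * (q + u k - u i) = C := by
  rintro ⟨C, hC⟩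
  obtain ⟨c, hc⟩ := hUne
  have : Nontrivial (Fin (n + 1)) := Fin.nontrivial_iff_two_le.2 (by omega)
  exact not_forall_hirzebruchSum_update_eq q c 0 hlam C
    (hirzebruchSum_update_eq_of_forall_mem q hU hc hC 0)
end

section
/- Let n ≥ 1 and let λ be a complex number. Consider the n+1 exponent sequences L_k = (k − λ(n+1)/2, followed by {0,1,…,n} \ {n−k}) for k = 0,…,n (as multisets), and the sequence R = (n + λ/2, n−1 + λ/2, …, 1 + λ/2, λ/2). If some L_k equals R as a multiset, then λ ∈ {0, 2, −2}. -/
/-!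
`L_k` arises from `{0, …, n}` by replacing `m = n − k` with `a = k − (n+1)λ/2`, while `R` is
`{0, …, n}` translated by `λ/2`. Comparing first and second power sums gives
`a − m = (n+1)λ/2` and `a² − m² = λ · n(n+1)/2 + (n+1)λ²/4`. Since `a + m = n − (n+1)λ/2` does
not depend on `k`, substituting both into `a² − m² = (a − m)(a + m)` leaves `(n+1)(n+2)λ² = 0`,
so in fact `λ = 0`.
-/

open Finset

/-- The multiset `L_k = {k − λ(n+1)/2} ∪ ({0,…,n} \ {n−k})` of exponents. -/
noncomputable def Lmul (n k : ℕ) (lam : ℂ) : Multiset ℂ :=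
  ((k : ℂ) - lam * ((n : ℂ) + 1) / 2) ::ₘ
    (((Finset.range (n + 1)).erase (n - k)).val.map (fun j => (j : ℂ)))

/-- The multiset `R = {j + λ/2 : j = 0,…,n}`. -/
noncomputable def Rmul (n : ℕ) (lam : ℂ) : Multiset ℂ :=
  (Multiset.range (n + 1)).map (fun j => (j : ℂ) + lam / 2)

lemma sub_eq_sum_map_of_cons_erase_eq_map_add {R M : Type*} [DecidableEq R] [Add R]
    [AddCommGroup M] (f : R → M) {s : Multiset R} {a m c : R} (hm : m ∈ s)
    (h : a ::ₘ s.erase m = s.map (· + c)) :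
    f a - f m = (s.map fun x => f (x + c) - f x).sum := by
  have hs : f m + ((s.erase m).map f).sum = (s.map f).sum := by
    rw [← Multiset.sum_cons, ← Multiset.map_cons, Multiset.cons_erase hm]
  have ht := congrArg (fun t => (t.map f).sum) h
  simp only [Multiset.map_cons, Multiset.sum_cons, Multiset.map_map, Function.comp_def] at ht
  rw [Multiset.sum_map_sub, ← ht, ← hs]
  abel

section Translate

variable {R : Type*} [CommRing R] (s : Multiset R) (c : R)

lemma sum_map_add_sub_self : (s.map fun x => x + c - x).sum = s.card * c := by
  simp [Multiset.map_const', nsmul_eq_mul]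

lemma sum_map_add_sq_sub_sq :
    (s.map fun x => (x + c) ^ 2 - x ^ 2).sum = 2 * c * s.sum + s.card * c ^ 2 := by
  rw [Multiset.map_congr rfl fun x _ => (by ring : (x + c) ^ 2 - x ^ 2 = 2 * c * x + c ^ 2),
    Multiset.sum_map_add, Multiset.sum_map_mul_left, Multiset.map_id']
  simp [Multiset.map_const', nsmul_eq_mul]

end Translate

lemma Lmul_eq_cons_erase {n k : ℕ} (lam : ℂ) :
    Lmul n k lam = ((k : ℂ) - lam * ((n : ℂ) + 1) / 2) ::ₘ
      ((Multiset.range (n + 1)).map (Nat.cast : ℕ → ℂ)).erase ((n - k : ℕ) : ℂ) := by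
  simp only [Lmul, Multiset.bind_singleton, Multiset.pure_def, Multiset.bind_def, Multiset.map_id',
    Finset.erase_val, Multiset.map_erase _ Nat.cast_injective, Finset.range_val]

lemma Rmul_eq_map_add (n : ℕ) (lam : ℂ) :
    Rmul n lam = ((Multiset.range (n + 1)).map (Nat.cast : ℕ → ℂ)).map (· + lam / 2) := by
  simp only [Rmul, Multiset.bind_singleton, Multiset.pure_def, Multiset.bind_def, Multiset.map_map]

lemma sum_map_cast_range_succ_mul_two (n : ℕ) :
    ((Multiset.range (n + 1)).map (Nat.cast : ℕ → ℂ)).sum * 2 = (n + 1) * n := by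
  have h := congrArg (Nat.cast : ℕ → ℂ) (Finset.sum_range_id_mul_two (n + 1))
  push_cast at h
  simpa [Finset.sum] using h

theorem multiset_equal_implies_lambda_general (n : ℕ) (lam : ℂ) (k : ℕ) (hk : k ≤ n)
    (h : Lmul n k lam = Rmul n lam) :
    lam = 0 ∨ lam = 2 ∨ lam = -2 := by
  set s := (Multiset.range (n + 1)).map (Nat.cast : ℕ → ℂ)
  rw [Lmul_eq_cons_erase, Rmul_eq_map_add] at h
  have hm : ((n - k : ℕ) : ℂ) ∈ s := Multiset.mem_map_of_mem _ (Multiset.mem_range.2 (by omega))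
  have hpow1 := sub_eq_sum_map_of_cons_erase_eq_map_add id hm h
  have hpow2 := sub_eq_sum_map_of_cons_erase_eq_map_add (· ^ 2) hm h
  have hcard : (s.card : ℂ) = n + 1 := by simp [s]
  have hsum : s.sum * 2 = (n + 1) * n := sum_map_cast_range_succ_mul_two n
  simp only [id, sum_map_add_sub_self, sum_map_add_sq_sub_sq, hcard, Nat.cast_sub hk] at hpow1 hpow2
  have hquad : ((n : ℂ) + 1) * ((n : ℂ) + 2) * lam ^ 2 = 0 := by
    linear_combination
      (-4 : ℂ) * hpow2 + 4 * ((n : ℂ) - (n + 1) * (lam / 2)) * hpow1 - 2 * lam * hsum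
  have hN : ((n : ℂ) + 1) * ((n : ℂ) + 2) ≠ 0 := by norm_cast
  exact Or.inl (pow_eq_zero_iff two_ne_zero |>.1 ((mul_eq_zero.1 hquad).resolve_left hN))

theorem multiset_equal_implies_lambda (n : ℕ) (hn : 1 ≤ n) (lam : ℂ) (k : ℕ) (hk : k ≤ n)
    (h : Lmul n k lam = Rmul n lam) :
    lam = 0 ∨ lam = 2 ∨ lam = -2 :=
  multiset_equal_implies_lambda_general n lam k hk h
end

section
/- Let n ≥ 1 and λ a complex number. If for every k ∈ {0,…,n} the multiset L_k = {k − λ(n+1)/2} ∪ ({0,…,n} \ {n−k}) contains a repeated element, then λ = 0. -/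
/-!
Write `c = λ(n+1)/2`. The elements of `{0,…,n} \ {n−k}` are distinct, so a repeat in `L_k`
forces `k − c` to be one of `0,…,n`. At `k = 0` this gives `c = −j₀` with `j₀ ∈ ℕ`, and at
`k = n` it gives `n + j₀ ≤ n`; hence `j₀ = 0` and `c = 0`.
-/

open Finset

theorem Multiset.mem_of_not_nodup_cons {α : Type*} {a : α} {s : Multiset α}
    (h : ¬ (a ::ₘ s).Nodup) (hs : s.Nodup) : a ∈ s := by
  by_contra ha
  exact h (Multiset.nodup_cons.mpr ⟨ha, hs⟩)

/- In `Lmul` the cast `ℕ → ℂ` is elaborated as a monadic lift inside the `Multiset` monad,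
so the definition is not syntactically a `Multiset.map` of casts. -/
theorem Lmul_eq_cons_map (n k : ℕ) (lam : ℂ) :
    Lmul n k lam = ((k : ℂ) - lam * ((n : ℂ) + 1) / 2) ::ₘ
      Multiset.map (fun j : ℕ => (j : ℂ)) ((range (n + 1)).erase (n - k)).val := by
  simp only [Lmul, bind_pure_comp, Multiset.fmap_def, Multiset.map_id']

theorem exists_nat_eq_of_not_nodup_Lmul {n k : ℕ} {lam : ℂ} (h : ¬ (Lmul n k lam).Nodup) :
    ∃ j ≤ n, (k : ℂ) - lam * ((n : ℂ) + 1) / 2 = j := by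
  rw [Lmul_eq_cons_map] at h
  obtain ⟨j, hj, hjk⟩ := Multiset.mem_map.mp <|
    Multiset.mem_of_not_nodup_cons h ((Finset.nodup _).map Nat.cast_injective)
  exact ⟨j, Nat.lt_succ_iff.mp (mem_range.mp (mem_of_mem_erase hj)), hjk.symm⟩

theorem all_repeated_implies_lambda_zero_general (n : ℕ) (lam : ℂ)
    (h : ∀ k ≤ n, ¬ (Lmul n k lam).Nodup) :
    lam = 0 := by
  obtain ⟨j₀, -, h₀⟩ := exists_nat_eq_of_not_nodup_Lmul (h 0 n.zero_le)
  obtain ⟨jₙ, hjₙ, hₙ⟩ := exists_nat_eq_of_not_nodup_Lmul (h n le_rfl)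
  have hsum : n + j₀ = jₙ := by
    have : ((n + j₀ : ℕ) : ℂ) = jₙ := by push_cast; linear_combination hₙ - h₀
    exact_mod_cast this
  obtain rfl : j₀ = 0 := by omega
  have hprod : lam * ((n : ℂ) + 1) = 0 := by
    push_cast at h₀
    linear_combination -2 * h₀
  exact (mul_eq_zero.mp hprod).resolve_right (Nat.cast_add_one_ne_zero n)

theorem all_repeated_implies_lambda_zero (n : ℕ) (hn : 1 ≤ n) (lam : ℂ)
    (h : ∀ k ≤ n, ¬ (Lmul n k lam).Nodup) :
    lam = 0 :=
  all_repeated_implies_lambda_zero_general n lam h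
end

section
/- Let f(t) = e^{λt}/(q + coth(t)) with q = −1 (so a = 1+q = 0, b = 1−q = 2): f(t) = e^{λt}/(coth(t) − 1), and suppose λ = 2(k−n)/(n+1) for some k ∈ {0,…,n−1}. Then f satisfies the Hirzebruch functional equation ∑_{k'=0}^n ∏_{i≠k'} 1/f(u_i − u_{k'}) = 0. -/
open Complex Finset

/-!
Put `x i = exp (2 * u i)`. Each factor `1 / f (u i - u j)` equals
`-2 * exp (-λ u i) * exp ((λ + 2) u j) / (x j - x i)`, so the `j`-th product is a constant
independent of `j` times `exp (((n + 1) λ + 2 n) u j) / ∏_{i ≠ j} (x j - x i)`, and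
`(n + 1) λ + 2 n = 2 k` turns the numerator into `x j ^ k`. The resulting sum is the coefficient
of `X ^ n` in the Lagrange interpolant of `X ^ k` at the nodes `x j`, which is zero as `k < n`.
-/

open Polynomial in
theorem Lagrange.sum_pow_div_prod_sub_eq_zero {F ι : Type*} [Field F] [DecidableEq ι]
    {s : Finset ι} {v : ι → F} (hvs : Set.InjOn v s) {k : ℕ} (hk : k + 1 < #s) :
    ∑ i ∈ s, v i ^ k / ∏ j ∈ s.erase i, (v i - v j) = 0 := by
  have hdeg : (X ^ k : F[X]).degree < #s := by
    rw [degree_X_pow]; exact_mod_cast (Nat.lt_succ_self k).trans hk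
  simpa [coeff_X_pow, show #s - 1 ≠ k by omega] using (coeff_eq_sum hvs hdeg).symm

theorem coth_sub_one {t : ℂ} (h : sinh t ≠ 0) : coth t - 1 = exp (-t) / sinh t := by
  rw [coth, div_sub_one h, cosh_sub_sinh]

theorem exp_two_mul_sub_exp_two_mul (a b : ℂ) :
    exp (2 * b) - exp (2 * a) = -2 * exp (a + b) * sinh (a - b) := by
  have h₁ : exp (a + b) * exp (a - b) = exp (2 * a) := by rw [← exp_add]; ring_nf
  have h₂ : exp (a + b) * exp (-(a - b)) = exp (2 * b) := by rw [← exp_add]; ring_nf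
  rw [sinh]
  linear_combination h₁ - h₂

theorem inv_exp_mul_div_coth_sub_one (lam a b : ℂ) (h : sinh (a - b) ≠ 0) :
    (exp (lam * (a - b)) / (coth (a - b) - 1))⁻¹
      = -2 * exp (-(lam * a)) * exp ((lam + 2) * b) / (exp (2 * b) - exp (2 * a)) := by
  have hexp : exp (-(a - b)) / exp (lam * (a - b))
      = exp (-(lam * a)) * exp ((lam + 2) * b) / exp (a + b) := by
    rw [← exp_sub, ← exp_add, ← exp_sub]; ring_nf
  rw [coth_sub_one h, exp_two_mul_sub_exp_two_mul, inv_div, div_right_comm, hexp]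
  field_simp

theorem prod_inv_exp_mul_div_coth_sub_one {n : ℕ} (lam : ℂ) (u : Fin (n + 1) → ℂ)
    (j : Fin (n + 1)) (hu : ∀ i, i ≠ j → sinh (u i - u j) ≠ 0) :
    ∏ i ∈ univ.erase j, (exp (lam * (u i - u j)) / (coth (u i - u j) - 1))⁻¹
      = (-2) ^ n * (∏ i, exp (-(lam * u i))) * exp (((n + 1) * lam + 2 * n) * u j)
          / ∏ i ∈ univ.erase j, (exp (2 * u j) - exp (2 * u i)) := by
  have hexp : exp (((n + 1) * lam + 2 * n) * u j)
      = exp (lam * u j) * exp ((lam + 2) * u j) ^ n := by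
    rw [← exp_nat_mul, ← exp_add]; ring_nf
  rw [prod_congr rfl fun i hi => inv_exp_mul_div_coth_sub_one lam _ _ (hu i (ne_of_mem_erase hi)),
    prod_div_distrib, prod_mul_distrib, prod_mul_distrib, prod_const, prod_const,
    card_erase_of_mem (mem_univ j), card_univ, Fintype.card_fin, add_tsub_cancel_right,
    ← mul_prod_erase univ _ (mem_univ j), hexp, exp_neg]
  field_simp

theorem degenerate_level_hirzebruch_zero_general (n : ℕ) (k : ℕ) (hk : k < n)
    (lam : ℂ) (hlam : lam = 2 * ((k : ℂ) - (n : ℂ)) / ((n : ℂ) + 1)) :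
    ∀ u : Fin (n + 1) → ℂ,
      (∀ i k' : Fin (n + 1), i ≠ k' →
        Complex.sinh (u i - u k') ≠ 0 ∧ coth (u i - u k') - 1 ≠ 0) →
      ∑ k' : Fin (n + 1), ∏ i ∈ Finset.univ.erase k',
        (Complex.exp (lam * (u i - u k')) / (coth (u i - u k') - 1))⁻¹ = 0 := by
  intro u hu
  have hlevel : ((n : ℂ) + 1) * lam + 2 * n = 2 * k := by
    rw [hlam]; field_simp; ring
  have hpow (j : Fin (n + 1)) : exp (2 * k * u j) = exp (2 * u j) ^ k := by
    rw [← exp_nat_mul]; ring_nf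
  have hinj : Set.InjOn (fun i => exp (2 * u i)) (univ : Finset (Fin (n + 1))) := by
    intro i _ j _ hij
    by_contra hne
    have h := exp_two_mul_sub_exp_two_mul (u i) (u j)
    rw [show exp (2 * u i) = exp (2 * u j) from hij, sub_self] at h
    simp [exp_ne_zero, (hu i j hne).1] at h
  simp_rw [prod_inv_exp_mul_div_coth_sub_one lam u _ fun i hi => (hu i _ hi).1, hlevel, hpow,
    mul_div_assoc, ← mul_sum]
  rw [Lagrange.sum_pow_div_prod_sub_eq_zero hinj (by simpa), mul_zero]

theorem degenerate_level_hirzebruch_zero (n : ℕ) (hn : 1 ≤ n) (k : ℕ) (hk : k < n)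
    (lam : ℂ) (hlam : lam = 2 * ((k : ℂ) - (n : ℂ)) / ((n : ℂ) + 1)) :
    ∀ u : Fin (n + 1) → ℂ,
      (∀ i k' : Fin (n + 1), i ≠ k' →
        Complex.sinh (u i - u k') ≠ 0 ∧ coth (u i - u k') - 1 ≠ 0) →
      ∑ k' : Fin (n + 1), ∏ i ∈ Finset.univ.erase k',
        (Complex.exp (lam * (u i - u k')) / (coth (u i - u k') - 1))⁻¹ = 0 :=
  degenerate_level_hirzebruch_zero_general n k hk lam hlam
end
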